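/- For distinct complex roots a_1,...,a_L (none zero) inside the unit circle and roots b_1,...,b_L, the contour integral (1/2πj) ∮_{|z|=1} (Ψ_A(z)−Ψ_B(z))(Ψ_A(z^{−1})−Ψ_B(z^{−1})) / ((1−Ψ_A(z))(1−Ψ_A(z^{−1}))) dz/z equals Σ_{k=1}^L [∏_{ℓ=1}^L (a_k−b_ℓ) / (a_k ∏_{ℓ≠k}(a_k−a_ℓ))] · [∏_{ℓ=1}^L (1−a_k b_ℓ*) / ∏_{ℓ=1}^L (1−a_k a_ℓ*) − 1], by the residue theorem applied to the poles at z = a_1,...,a_L and z = 0 inside the unit circle. -/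

import Mathlib

/-! The integrand factors as `((B - A) / A)(z) · φ(z) / z`, where `A`, `B` are the monic
polynomials with roots `a`, `b` and `φ = (Q - P) / P` with `P(z) = ∏ (1 - a_ℓ z)`,
`Q(z) = ∏ (1 - b_ℓ z)`. As `B - A` has degree `< L`, Lagrange interpolation at the distinct nodes
`a_k` gives `(B - A) / A = Σ_k c_k / (z - a_k)` with `c_k = B(a_k) / ∏_{ℓ ≠ k} (a_k - a_ℓ)`, and
`1 / (z (z - a_k)) = a_k⁻¹ (1 / (z - a_k) - 1 / z)`.
Since `φ` is holomorphic on the closed unit disc (the zeros of `P` are the `1 / a_ℓ`) and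
`φ(0) = 0`, Cauchy's formula evaluates each term to `c_k φ(a_k) / a_k`. Closure of both root
families under conjugation puts the conjugates into `φ(a_k)`. -/

open Complex Real Finset Metric

theorem prod_comp_eq_of_map_univ_val_eq {ι α M : Type*} [Fintype ι] [CommMonoid M]
    {f g : ι → α} (h : univ.val.map f = univ.val.map g) (p : α → M) :
    ∏ i, p (f i) = ∏ i, p (g i) := by
  simpa only [prod_eq_multiset_prod, Multiset.map_map, Function.comp_def] using
    congrArg (fun m => (m.map p).prod) h

namespace Lagrange

open Polynomial

variable {F ι : Type*} [Field F] [DecidableEq ι] {s : Finset ι} {a : ι → F}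

theorem prod_sub_sub_prod_sub_eq_mul_sum (ha : Set.InjOn a s) (b : ι → F) {x : F}
    (hx : ∀ i ∈ s, x ≠ a i) :
    ∏ i ∈ s, (x - b i) - ∏ i ∈ s, (x - a i) =
      (∏ i ∈ s, (x - a i)) * ∑ i ∈ s, nodalWeight s a i * (x - a i)⁻¹ * ∏ j ∈ s, (a i - b j) := by
  have hdeg : (nodal s b - nodal s a).degree < #s := by
    have hb : (nodal s b).Monic := nodal_monic
    have ha : (nodal s a).Monic := nodal_monic
    simpa only [degree_nodal] using degree_sub_lt_left (degree_nodal.trans degree_nodal.symm)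
      hb.ne_zero (hb.leadingCoeff.trans ha.leadingCoeff.symm)
  rw [← eval_nodal, ← eval_nodal, ← eval_sub, eq_interpolate ha hdeg,
    eval_interpolate_not_at_node _ hx, eval_nodal]
  refine congrArg _ (sum_congr rfl fun i hi => ?_)
  rw [eval_sub, eval_nodal_at_node hi, sub_zero, eval_nodal]

end Lagrange

theorem ne_of_mem_sphere_of_mem_ball {α : Type*} [PseudoMetricSpace α] {x y z : α} {r : ℝ}
    (hy : y ∈ sphere x r) (hz : z ∈ ball x r) : y ≠ z :=
  ne_of_mem_of_not_mem hy (sphere_disjoint_ball.notMem_of_mem_right hz)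

section Residue

variable {f : ℂ → ℂ} {R : ℝ} {w : ℂ}

theorem continuousOn_div_sub {c : ℂ} (hf : ContinuousOn f (sphere c R)) (hw : w ∈ ball c R) :
    ContinuousOn (fun z => f z / (z - w)) (sphere c R) :=
  hf.div (continuousOn_id.sub continuousOn_const) fun _ hz =>
    sub_ne_zero.2 (ne_of_mem_sphere_of_mem_ball hz hw)

theorem continuousOn_div_mul_sub (hf : ContinuousOn f (sphere 0 R)) (hw : w ∈ ball 0 R) :
    ContinuousOn (fun z => f z / (z * (z - w))) (sphere 0 R) :=
  hf.div (continuousOn_id.mul (continuousOn_id.sub continuousOn_const)) fun _ hz =>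
    mul_ne_zero (ne_of_mem_sphere_of_mem_ball hz (mem_ball_self (pos_of_mem_ball hw)))
      (sub_ne_zero.2 (ne_of_mem_sphere_of_mem_ball hz hw))

theorem circleIntegral_div_mul_sub (hf : DifferentiableOn ℂ f (closedBall 0 R))
    (hw : w ∈ ball 0 R) (hw0 : w ≠ 0) :
    (∮ z in C(0, R), f z / (z * (z - w))) = 2 * π * I * ((f w - f 0) / w) := by
  have hR : 0 < R := pos_of_mem_ball hw
  have h0 : (0 : ℂ) ∈ ball 0 R := mem_ball_self hR
  have hfc : ContinuousOn f (sphere 0 R) := hf.continuousOn.mono sphere_subset_closedBall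
  have cauchy : ∀ v ∈ ball 0 R, (∮ z in C(0, R), f z / (z - v)) = 2 * π * I * f v := fun v hv => by
    simpa only [smul_eq_mul, div_eq_inv_mul] using hf.circleIntegral_sub_inv_smul hv
  have hsplit : Set.EqOn (fun z => f z / (z * (z - w)))
      (fun z => w⁻¹ * (f z / (z - w) - f z / (z - 0))) (sphere 0 R) := fun z hz => by
    have hz0 := ne_of_mem_sphere_of_mem_ball hz h0
    have hzw := sub_ne_zero.2 (ne_of_mem_sphere_of_mem_ball hz hw)
    field_simp
    ring
  rw [circleIntegral.integral_congr hR.le hsplit, circleIntegral.integral_const_mul,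
    circleIntegral.integral_sub ((continuousOn_div_sub hfc hw).circleIntegrable hR.le)
      ((continuousOn_div_sub hfc h0).circleIntegrable hR.le), cauchy w hw, cauchy 0 h0]
  ring

theorem circleIntegral_sum_mul_div_mul_sub {ι : Type*} (s : Finset ι) (c w : ι → ℂ)
    (hf : DifferentiableOn ℂ f (closedBall 0 R)) (hw : ∀ i ∈ s, w i ∈ ball 0 R)
    (hw0 : ∀ i ∈ s, w i ≠ 0) :
    (∮ z in C(0, R), ∑ i ∈ s, c i * (f z / (z * (z - w i)))) =
      2 * π * I * ∑ i ∈ s, c i * ((f (w i) - f 0) / w i) := by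
  have hfc : ContinuousOn f (sphere 0 R) := hf.continuousOn.mono sphere_subset_closedBall
  rw [circleIntegral.integral_fun_sum (f := fun i z => c i * (f z / (z * (z - w i)))) fun i hi =>
    (continuousOn_const.mul (continuousOn_div_mul_sub hfc (hw i hi))).circleIntegrable
      (pos_of_mem_ball (hw i hi)).le, mul_sum]
  refine sum_congr rfl fun i hi => ?_
  rw [circleIntegral.integral_const_mul, circleIntegral_div_mul_sub hf (hw i hi) (hw0 i hi)]
  ring

end Residue

theorem prod_one_sub_mul_ne_zero {𝕜 ι : Type*} [NormedField 𝕜] [Fintype ι] {a : ι → 𝕜}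
    (ha : ∀ i, ‖a i‖ < 1) {z : 𝕜} (hz : ‖z‖ ≤ 1) : ∏ i, (1 - a i * z) ≠ 0 :=
  prod_ne_zero_iff.2 fun i _ => sub_ne_zero.2 fun h => by
    have h' := congrArg norm h
    rw [norm_one, norm_mul] at h'
    nlinarith [ha i, norm_nonneg z, norm_nonneg (a i)]

section Integrand

variable {F ι : Type*} [Field F] [Fintype ι]

theorem prod_one_sub_mul_inv (c : ι → F) {z : F} (hz : z ≠ 0) :
    ∏ i, (1 - c i * z⁻¹) = z⁻¹ ^ Fintype.card ι * ∏ i, (z - c i) := by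
  rw [← card_univ, ← prod_const, ← prod_mul_distrib]
  exact prod_congr rfl fun i _ => by field_simp

theorem ar_distance_integrand_eq_sum [DecidableEq ι] {a : ι → F} (ha : Function.Injective a)
    (b : ι → F) {z : F} (hz : z ≠ 0) (hza : ∀ i, z ≠ a i) :
    ((∏ i, (1 - b i * z⁻¹) - ∏ i, (1 - a i * z⁻¹)) * (∏ i, (1 - b i * z) - ∏ i, (1 - a i * z))) /
        ((∏ i, (1 - a i * z⁻¹)) * (∏ i, (1 - a i * z)) * z) =
      ∑ k, Lagrange.nodalWeight univ a k * (∏ i, (a k - b i)) *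
        ((∏ i, (1 - b i * z) - ∏ i, (1 - a i * z)) / (∏ i, (1 - a i * z)) / (z * (z - a k))) := by
  have hA : ∏ i, (z - a i) ≠ 0 := prod_ne_zero_iff.2 fun i _ => sub_ne_zero.2 (hza i)
  have hzn : z⁻¹ ^ Fintype.card ι ≠ 0 := pow_ne_zero _ (inv_ne_zero hz)
  rw [prod_one_sub_mul_inv b hz, prod_one_sub_mul_inv a hz, ← mul_sub,
    Lagrange.prod_sub_sub_prod_sub_eq_mul_sum ha.injOn b fun i _ => hza i, mul_assoc _ _ z,
    mul_div_mul_comm, ← mul_assoc, mul_div_cancel_left₀ _ (mul_ne_zero hzn hA), sum_mul]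
  refine sum_congr rfl fun k _ => ?_
  simp only [div_eq_mul_inv, mul_inv]
  ring

end Integrand

theorem ar_distance_residue_formula_general {L : ℕ} (a b : Fin L → ℂ)
    (ha1 : ∀ ℓ, ‖a ℓ‖ < 1)
    (ha0 : ∀ ℓ, a ℓ ≠ 0) (hinj : Function.Injective a)
    (haconj : Finset.univ.val.map (fun ℓ => (starRingEnd ℂ) (a ℓ)) =
      Finset.univ.val.map a)
    (hbconj : Finset.univ.val.map (fun ℓ => (starRingEnd ℂ) (b ℓ)) =
      Finset.univ.val.map b) :
    (2 * (π : ℂ) * I)⁻¹ *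
        (∮ z in C(0, 1),
          (((∏ ℓ, (1 - b ℓ * z⁻¹)) - ∏ ℓ, (1 - a ℓ * z⁻¹)) *
              ((∏ ℓ, (1 - b ℓ * z)) - ∏ ℓ, (1 - a ℓ * z))) /
            ((∏ ℓ, (1 - a ℓ * z⁻¹)) * (∏ ℓ, (1 - a ℓ * z)) * z)) =
      ∑ k, (∏ ℓ, (a k - b ℓ)) / (a k * ∏ ℓ ∈ Finset.univ.erase k, (a k - a ℓ)) *
        ((∏ ℓ, (1 - a k * (starRingEnd ℂ) (b ℓ))) /
            (∏ ℓ, (1 - a k * (starRingEnd ℂ) (a ℓ))) - 1) := by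
  set φ : ℂ → ℂ := fun z => (∏ ℓ, (1 - b ℓ * z) - ∏ ℓ, (1 - a ℓ * z)) / ∏ ℓ, (1 - a ℓ * z)
  have ha_mem : ∀ k, a k ∈ ball (0 : ℂ) 1 := fun k => mem_ball_zero_iff.2 (ha1 k)
  have hφ : DifferentiableOn ℂ φ (closedBall 0 1) := by
    refine DifferentiableOn.div (by fun_prop) (by fun_prop) fun z hz => ?_
    exact prod_one_sub_mul_ne_zero ha1 (mem_closedBall_zero_iff.1 hz)
  rw [circleIntegral.integral_congr zero_le_one
      (g := fun z => ∑ k, Lagrange.nodalWeight univ a k * (∏ ℓ, (a k - b ℓ)) *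
        (φ z / (z * (z - a k)))) fun z hz => ar_distance_integrand_eq_sum hinj b
        (ne_of_mem_sphere_of_mem_ball hz (mem_ball_self one_pos))
        fun k => ne_of_mem_sphere_of_mem_ball hz (ha_mem k),
    circleIntegral_sum_mul_div_mul_sub univ _ _ hφ (fun k _ => ha_mem k) (fun k _ => ha0 k),
    ← mul_assoc, inv_mul_cancel₀ two_pi_I_ne_zero, one_mul]
  refine sum_congr rfl fun k _ => ?_
  have hP := prod_one_sub_mul_ne_zero ha1 (ha1 k).le
  rw [prod_comp_eq_of_map_univ_val_eq hbconj (fun w => 1 - a k * w),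
    prod_comp_eq_of_map_univ_val_eq haconj (fun w => 1 - a k * w)]
  simp only [φ, Lagrange.nodalWeight, prod_inv_distrib, mul_zero, sub_self, prod_const_one,
    div_one, sub_zero, mul_comm (a k)]
  rw [div_sub_one hP]
  field_simp

/-- Residue evaluation of the AR-distance contour integral.  With
`1 - Ψ_A(z) = ∏_ℓ (1 - a_ℓ z⁻¹)` and `1 - Ψ_B(z) = ∏_ℓ (1 - b_ℓ z⁻¹)`, where
the `a_ℓ` are distinct, nonzero, of modulus `< 1`, the `b_ℓ` have modulus `< 1`,
and both root families are closed under complex conjugation (real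
coefficients), the contour integral
`(1/2πj) ∮_{|z|=1} (Ψ_A(z)-Ψ_B(z))(Ψ_A(z⁻¹)-Ψ_B(z⁻¹)) / ((1-Ψ_A(z))(1-Ψ_A(z⁻¹))) dz/z`
equals
`Σ_k [∏_ℓ (a_k - b_ℓ) / (a_k ∏_{ℓ≠k} (a_k - a_ℓ))] · [∏_ℓ (1 - a_k b_ℓ*) / ∏_ℓ (1 - a_k a_ℓ*) - 1]`. -/
theorem ar_distance_residue_formula {L : ℕ} (a b : Fin L → ℂ)
    (ha1 : ∀ ℓ, ‖a ℓ‖ < 1) (hb1 : ∀ ℓ, ‖b ℓ‖ < 1)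
    (ha0 : ∀ ℓ, a ℓ ≠ 0) (hinj : Function.Injective a)
    (haconj : Finset.univ.val.map (fun ℓ => (starRingEnd ℂ) (a ℓ)) =
      Finset.univ.val.map a)
    (hbconj : Finset.univ.val.map (fun ℓ => (starRingEnd ℂ) (b ℓ)) =
      Finset.univ.val.map b) :
    (2 * (π : ℂ) * I)⁻¹ *
        (∮ z in C(0, 1),
          (((∏ ℓ, (1 - b ℓ * z⁻¹)) - ∏ ℓ, (1 - a ℓ * z⁻¹)) *
              ((∏ ℓ, (1 - b ℓ * z)) - ∏ ℓ, (1 - a ℓ * z))) /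
            ((∏ ℓ, (1 - a ℓ * z⁻¹)) * (∏ ℓ, (1 - a ℓ * z)) * z)) =
      ∑ k, (∏ ℓ, (a k - b ℓ)) / (a k * ∏ ℓ ∈ Finset.univ.erase k, (a k - a ℓ)) *
        ((∏ ℓ, (1 - a k * (starRingEnd ℂ) (b ℓ))) /
            (∏ ℓ, (1 - a k * (starRingEnd ℂ) (a ℓ))) - 1) :=
  ar_distance_residue_formula_general a b ha1 ha0 hinj haconj hbconj
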